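/- Let G be a parity game and let ρ̄ be the least game parity progress measure of G. Then for every vertex v ∈ V there exists a positional strategy σ for player Even such that every play π starting at v and consistent with σ satisfies θ(π) ≤ ρ̄(v), where elements of M_Even are compared with values in M_Even_ext in the order of M_Even_ext. -/

import Mathlib

open Classical

noncomputable section

instance (priority := 5000) (n : ℕ) : WellFoundedLT (Fin n) :=
  Finite.to_wellFoundedLT

noncomputable instance (priority := 5000) (n : ℕ) : LinearOrder (Lex (Fin n → ℕ)) :=
  inferInstance

/-- Least element of a set, if it exists; otherwise a default value. -/
def sLeast {α : Type*} [Preorder α] (s : Set α) (dflt : α) : α :=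
  if h : ∃ a, IsLeast s a then h.choose else dflt

/-- Greatest element of a set, if it exists; otherwise a default value. -/
def sGreatest {α : Type*} [Preorder α] (s : Set α) (dflt : α) : α :=
  if h : ∃ a, IsGreatest s a then h.choose else dflt

/-- A parity game: a finite set of vertices with a total edge relation, a priority
function and an ownership function (`ownerEven v = true` iff `v ∈ V_Even`). -/
structure ParityGame (V : Type*) [Fintype V] where
  E : V → V → Prop
  total : ∀ v, ∃ w, E v w
  prio : V → ℕ
  ownerEven : V → Bool

namespace ParityGame

variable {V : Type*} [Fintype V] [DecidableEq V] (G : ParityGame V)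

/-- `d` is one plus the maximal priority occurring in the game. -/
def d : ℕ := (Finset.univ.sup G.prio) + 1

/-- The domain of (extended) measures: `⊤` together with `d`-tuples of naturals,
ordered lexicographically with `⊤` maximal.  This is `M_Even_ext` (together with
tuples that are nonzero at even positions, which are never used). -/
abbrev Meas : Type _ := WithTop (Lex (Fin G.d → ℕ))

/-- `nP i` is the number of vertices of priority `i`. -/
def nP (i : ℕ) : ℕ := (Finset.univ.filter (fun v => G.prio v = i)).card

/-- Membership in `M_Even`: `⊤`, or a `d`-tuple which is `0` at even positions and
bounded by `nP i` at odd positions `i`. -/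
def inMEven (m : G.Meas) : Prop :=
  m = ⊤ ∨ ∃ f : Fin G.d → ℕ, m = ((toLex f : Lex (Fin G.d → ℕ)) : G.Meas) ∧
    ∀ i : Fin G.d, (Even (i : ℕ) → f i = 0) ∧ (¬ Even (i : ℕ) → f i ≤ G.nP (i : ℕ))

/-- Membership in `M_Even_ext`: `⊤`, or a `d`-tuple which is `0` at even positions. -/
def inMEvenExt (m : G.Meas) : Prop :=
  m = ⊤ ∨ ∃ f : Fin G.d → ℕ, m = ((toLex f : Lex (Fin G.d → ℕ)) : G.Meas) ∧
    ∀ i : Fin G.d, Even (i : ℕ) → f i = 0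

/-- Truncation of a measure to components `0, …, k` (other components set to `0`);
`⊤` is mapped to `⊤`. -/
def trunc (k : ℕ) (m : G.Meas) : G.Meas :=
  WithTop.map (fun f : Lex (Fin G.d → ℕ) => toLex (fun j : Fin G.d => if (j : ℕ) ≤ k then ofLex f j else 0)) m

/-- `a ≥_k b` : comparison of measures on components `0, …, k` only. -/
def geAt (k : ℕ) (a b : G.Meas) : Prop := G.trunc k b ≤ G.trunc k a

/-- `a >_k b` : strict comparison of measures on components `0, …, k` only. -/
def gtAt (k : ℕ) (a b : G.Meas) : Prop := G.trunc k b < G.trunc k a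

/-- The defining condition of `Prog(ρ,v,w)`. -/
def progCond (ρ : V → G.Meas) (v w : V) (m : G.Meas) : Prop :=
  if Even (G.prio v) then G.geAt (G.prio v) m (ρ w)
  else (G.gtAt (G.prio v) m (ρ w) ∨ (m = ⊤ ∧ ρ w = ⊤))

/-- `Prog(ρ,v,w)`: the least element of `M_Even` satisfying `progCond`. -/
def Prog (ρ : V → G.Meas) (v w : V) : G.Meas :=
  if h : ∃ m, IsLeast {m | G.inMEven m ∧ G.progCond ρ v w m} m then h.choose else ⊤

/-- `ρ` takes values in `M_Even`. -/
def IsMeasure (ρ : V → G.Meas) : Prop := ∀ v, G.inMEven (ρ v)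

/-- Game parity progress measure. -/
def IsGPM (ρ : V → G.Meas) : Prop :=
  G.IsMeasure ρ ∧ ∀ v,
    (G.ownerEven v = true → ∃ w, G.E v w ∧ G.geAt (G.prio v) (ρ v) (G.Prog ρ v w)) ∧
    (G.ownerEven v = false → ∀ w, G.E v w → G.geAt (G.prio v) (ρ v) (G.Prog ρ v w))

/-- A play: an infinite `E`-path. -/
def IsPlay (π : ℕ → V) : Prop := ∀ n, G.E (π n) (π (n + 1))

/-- Priority `p` occurs infinitely often on `π`. -/
def InfOft (π : ℕ → V) (p : ℕ) : Prop := ∀ N, ∃ n, N ≤ n ∧ G.prio (π n) = p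

/-- A play is won by Even iff the least priority occurring infinitely often is even. -/
def WonByEven (π : ℕ → V) : Prop := Even (sInf {p | G.InfOft π p})

/-- Won by player `i` (`true` = Even, `false` = Odd). -/
def WonBy (i : Bool) (π : ℕ → V) : Prop :=
  if i then G.WonByEven π else ¬ G.WonByEven π

/-- The history of a play before time `n`. -/
def hist (π : ℕ → V) (n : ℕ) : List V := List.ofFn (fun k : Fin n => π (k : ℕ))

/-- A (history-dependent) strategy for player `i` is valid if it always moves along edges
from vertices of player `i`. -/
def ValidStrat (i : Bool) (σ : List V → V → V) : Prop :=
  ∀ h v, G.ownerEven v = i → G.E v (σ h v)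

/-- Consistency of a play with a history-dependent strategy of player `i`. -/
def ConsH (i : Bool) (σ : List V → V → V) (π : ℕ → V) : Prop :=
  ∀ n, G.ownerEven (π n) = i → π (n + 1) = σ (hist π n) (π n)

/-- Consistency of a play with a positional strategy of player `i`. -/
def ConsP (i : Bool) (σ : V → V) (π : ℕ → V) : Prop :=
  ∀ n, G.ownerEven (π n) = i → π (n + 1) = σ (π n)

/-- Winning region of player `i`: vertices from which `i` has a winning strategy. -/
def WinRegion (i : Bool) : Set V :=
  {v | ∃ σ : List V → V → V, G.ValidStrat i σ ∧
    ∀ π, G.IsPlay π → π 0 = v → G.ConsH i σ π → G.WonBy i π}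

/-- The `i`-attractor into `U`. -/
def Attr (i : Bool) (U : Set V) : Set V :=
  ⋂₀ {A | U ⊆ A ∧
    (∀ v, G.ownerEven v = i → (∃ w, G.E v w ∧ w ∈ A) → v ∈ A) ∧
    (∀ v, G.ownerEven v ≠ i → (∀ w, G.E v w → w ∈ A) → v ∈ A)}

/-- The guarded attractor `Attr^{≥k}_{Odd,W}(U)`. -/
def GAttr (k : ℕ) (W U : Set V) : Set V :=
  ⋂₀ {A | U ⊆ A ∧ A ⊆ W ∩ {v | k ≤ G.prio v} ∧
    ∀ u ∈ W ∩ {v | k ≤ G.prio v},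
      (G.ownerEven u = false → (∃ w, G.E u w ∧ w ∈ A) → u ∈ A) ∧
      (G.ownerEven u = true → (∀ w, G.E u w → w ∈ W → w ∈ A) → u ∈ A)}

/-- The lifting operator `Lift(ρ, v)`. -/
def Lift (ρ : V → G.Meas) (v : V) : V → G.Meas :=
  Function.update ρ v
    (if G.ownerEven v = true
      then max (ρ v) (sLeast {m | ∃ w, G.E v w ∧ m = G.Prog ρ v w} ⊤)
      else max (ρ v) (sGreatest {m | ∃ w, G.E v w ∧ m = G.Prog ρ v w} ⊤))

/-- The all-zero measure. -/
def zeroMeas : G.Meas := ((toLex (fun _ : Fin G.d => 0) : Lex (Fin G.d → ℕ)) : G.Meas)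

/-- A lifting sequence `ρ₀, …, ρ_N` in which `v` is the first vertex lifted to `⊤`. -/
def FirstTop (ρs : ℕ → V → G.Meas) (N : ℕ) (v : V) : Prop :=
  (∀ u, ρs 0 u = G.zeroMeas) ∧
  (∀ j < N, ∃ u, ρs (j + 1) = G.Lift (ρs j) u ∧
    (∀ w, ρs j w ≤ ρs (j + 1) w) ∧ ρs j ≠ ρs (j + 1)) ∧
  (∀ j < N, ∀ w, ρs j w ≠ ⊤) ∧
  ρs N v = ⊤

/-- The prefix `π 0 … π l` of a play is an `i`-dominated stretch. -/
def domStretchPrefix (π : ℕ → V) (i l : ℕ) : Prop :=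
  (∀ m ≤ l, i ≤ G.prio (π m)) ∧ (∃ m ≤ l, G.prio (π m) = i)

/-- The degree of the prefix `π 0 … π l` with respect to priority `i`: the number of
its vertices of priority `i`. -/
def degree (π : ℕ → V) (i l : ℕ) : ℕ :=
  ((Finset.range (l + 1)).filter (fun m => G.prio (π m) = i)).card

/-- The value `θ(π)` of a play: `⊤` if `π` is won by Odd, and otherwise the tuple whose
component at each odd position `i` is the degree of the maximal `i`-dominated stretch
that is a prefix of `π` (and `0` if there is no such prefix). -/
def theta (π : ℕ → V) : G.Meas :=
  if G.WonByEven π then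
    ((toLex (fun j : Fin G.d =>
      if Even (j : ℕ) then 0
      else sSup {c | ∃ l, G.domStretchPrefix π (j : ℕ) l ∧ c = G.degree π (j : ℕ) l}) :
        Lex (Fin G.d → ℕ)) : G.Meas)
  else ⊤

/-- `U` is an `i`-dominion inside the subgame induced on `W`. -/
def IsDominionIn (W : Set V) (i : Bool) (U : Set V) : Prop :=
  ∃ σ : List V → V → V,
    (∀ h u, u ∈ W → G.ownerEven u = i → G.E u (σ h u) ∧ σ h u ∈ W) ∧
    ∀ π, G.IsPlay π → (∀ n, π n ∈ W) → π 0 ∈ U → G.ConsH i σ π →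
      (∀ n, π n ∈ U) ∧ G.WonBy i π

/-- `U` is an `i`-dominion in `G`. -/
def IsDominion (i : Bool) (U : Set V) : Prop := G.IsDominionIn Set.univ i U

/-- Winning region of player `i` in the subgame induced on `W`. -/
def WinIn (W : Set V) (i : Bool) : Set V :=
  {v | v ∈ W ∧ ∃ σ : List V → V → V,
    (∀ h u, u ∈ W → G.ownerEven u = i → G.E u (σ h u) ∧ σ h u ∈ W) ∧
    ∀ π, G.IsPlay π → (∀ n, π n ∈ W) → π 0 = v → G.ConsH i σ π → G.WonBy i π}

end ParityGame

open ParityGame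

open Filter

/-!
Let Even move to a successor witnessing the progress-measure condition for `ρ̄`. Along any play
consistent with this, the truncation of `ρ̄` at the current priority never increases and strictly
decreases at odd priorities; by well-foundedness the least priority seen infinitely often is even.
For the value, the potential "number of `i`-vertices seen so far inside the `i`-dominated prefix,
plus the `i`-th component of `ρ̄` while that prefix lasts" is lexicographically antitone: an
`i`-vertex adds one to the count but strictly decreases the measure truncated at `i`. It starts
at `ρ̄(v)` and eventually dominates `θ(π)`.
-/

section TruncTuple

variable {d : ℕ}

def truncTuple (k : ℕ) (f : Fin d → ℕ) : Fin d → ℕ := fun j => if (j : ℕ) ≤ k then f j else 0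

@[simp] lemma truncTuple_apply (k : ℕ) (f : Fin d → ℕ) (j : Fin d) :
    truncTuple k f j = if (j : ℕ) ≤ k then f j else 0 := rfl

lemma truncTuple_of_le {k : ℕ} (hk : d ≤ k) (f : Fin d → ℕ) : truncTuple k f = f :=
  funext fun j => if_pos (j.isLt.le.trans hk)

lemma truncTuple_truncTuple {k' k : ℕ} (h : k' ≤ k) (f : Fin d → ℕ) :
    truncTuple k' (truncTuple k f) = truncTuple k' f :=
  funext fun j => by simp only [truncTuple_apply]; split_ifs <;> first | rfl | omega

lemma truncTuple_le_truncTuple {k k' : ℕ} (h : k ≤ k') (f : Fin d → ℕ) :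
    truncTuple k f ≤ truncTuple k' f := fun j => by
  simp only [truncTuple_apply]; split_ifs <;> omega

lemma toLex_truncTuple_mono {f g : Fin d → ℕ} (h : toLex f ≤ toLex g) (k : ℕ) :
    toLex (truncTuple k f) ≤ toLex (truncTuple k g) := by
  rcases h.eq_or_lt with h | ⟨i, hbef, hlt⟩
  · rw [toLex.injective h]
  by_cases hik : (i : ℕ) ≤ k
  · refine le_of_lt ⟨i, fun j hj => ?_, ?_⟩
    · simp only [Pi.toLex_apply, truncTuple_apply, show f j = g j from hbef j hj]
    · simpa [hik] using hlt
  · refine le_of_eq (congrArg toLex (funext fun j => ?_))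
    by_cases hj : (j : ℕ) ≤ k
    · simp only [truncTuple_apply, hj, if_true]
      exact hbef j (Fin.lt_def.2 (by omega))
    · simp [hj]

lemma toLex_truncTuple_le_of_le {k' k : ℕ} (hk : k' ≤ k) {f g : Fin d → ℕ}
    (h : toLex (truncTuple k f) ≤ toLex (truncTuple k g)) :
    toLex (truncTuple k' f) ≤ toLex (truncTuple k' g) := by
  simpa only [truncTuple_truncTuple hk] using toLex_truncTuple_mono h k'

/-- Tuples supported on `0, …, k` behave like numbers with least significant digit `k`. -/
lemma toLex_truncTuple_add_single_le {k : Fin d} {f g : Fin d → ℕ}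
    (h : toLex (truncTuple k f) < toLex (truncTuple k g)) :
    toLex (truncTuple k f + Pi.single k 1) ≤ toLex (truncTuple k g) := by
  obtain ⟨i, hbef, hlt⟩ := h
  have hik : i ≤ k := by
    by_contra hik
    simp [hik] at hlt
  have hbef' : ∀ j < i, (truncTuple k f + Pi.single k 1 : Fin d → ℕ) j = truncTuple k g j :=
    fun j hj => by simpa [Pi.single_apply, (hj.trans_le hik).ne] using hbef j hj
  rcases hik.lt_or_eq with hik | rfl
  · exact le_of_lt ⟨i, hbef', by simpa [Pi.single_apply, hik.ne] using hlt⟩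
  · simp only [Pi.toLex_apply, truncTuple_apply, le_refl, if_true] at hlt
    rcases (Nat.succ_le_of_lt hlt).lt_or_eq with hlt' | heq
    · exact le_of_lt ⟨i, hbef', by simpa using hlt'⟩
    · refine le_of_eq (congrArg toLex (funext fun j => ?_))
      rcases lt_trichotomy j i with hj | rfl | hj
      · exact hbef' j hj
      · simpa using heq
      · simp [hj.ne', not_le.2 (Fin.lt_def.1 hj)]

end TruncTuple

lemma not_frequently_lt_of_eventually_le {α : Type*} [Preorder α] [WellFoundedLT α]
    {f : ℕ → α} (hle : ∀ᶠ n in atTop, f (n + 1) ≤ f n) : ¬ ∃ᶠ n in atTop, f (n + 1) < f n := by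
  intro hfreq
  obtain ⟨M, hM⟩ := eventually_atTop.1 hle
  have hanti : Antitone fun k => f (M + k) :=
    antitone_nat_of_succ_le fun k => hM (M + k) (Nat.le_add_right M k)
  obtain ⟨_, ⟨k₀, rfl⟩, hmin⟩ :=
    wellFounded_lt.has_min (Set.range fun k => f (M + k)) ⟨_, 0, rfl⟩
  obtain ⟨n, hn, hlt⟩ := frequently_atTop.1 hfreq (M + k₀)
  obtain ⟨k, rfl⟩ := Nat.exists_eq_add_of_le ((Nat.le_add_right M k₀).trans hn)
  exact hmin _ ⟨k + 1, rfl⟩ (hlt.trans_le (hanti (by omega)))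

lemma Nat.eventually_sSup_le {S : Set ℕ} {f : ℕ → ℕ}
    (h : ∀ c ∈ S, ∀ᶠ N in atTop, c ≤ f N) : ∀ᶠ N in atTop, sSup S ≤ f N := by
  rcases S.eq_empty_or_nonempty with rfl | hne
  · simp
  by_cases hbdd : BddAbove S
  · exact h _ (Nat.sSup_mem hne hbdd)
  · simp [Nat.sSup_of_not_bddAbove hbdd]

namespace ParityGame

variable {V : Type*} [Fintype V] (G : ParityGame V)

lemma prio_lt_d (v : V) : G.prio v < G.d :=
  Nat.lt_succ_of_le (Finset.le_sup (Finset.mem_univ v))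

lemma trunc_coe (k : ℕ) (f : Fin G.d → ℕ) :
    G.trunc k ((toLex f : Lex (Fin G.d → ℕ)) : G.Meas) =
      ((toLex (truncTuple k f) : Lex _) : G.Meas) :=
  rfl

lemma trunc_eq_top_iff {k : ℕ} {m : G.Meas} : G.trunc k m = ⊤ ↔ m = ⊤ :=
  WithTop.map_eq_top_iff

lemma progCond_top (ρ : V → G.Meas) (v w : V) : G.progCond ρ v w ⊤ := by
  have htop : G.trunc (G.prio v) ⊤ = ⊤ := G.trunc_eq_top_iff.2 rfl
  unfold progCond geAt gtAt
  split_ifs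
  · simp [htop]
  · by_cases hw : ρ w = ⊤
    · exact Or.inr ⟨rfl, hw⟩
    · exact Or.inl (htop ▸ lt_top_iff_ne_top.2 (mt G.trunc_eq_top_iff.1 hw))

lemma progCond_prog (ρ : V → G.Meas) (v w : V) : G.progCond ρ v w (G.Prog ρ v w) := by
  have hne : {m | G.inMEven m ∧ G.progCond ρ v w m}.Nonempty :=
    ⟨⊤, Or.inl rfl, G.progCond_top ρ v w⟩
  have hleast : ∃ m, IsLeast {m | G.inMEven m ∧ G.progCond ρ v w m} m :=
    ⟨_, wellFounded_lt.min_mem _ hne, fun _ hm => wellFounded_lt.min_le hm⟩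
  rw [Prog, dif_pos hleast]
  exact hleast.choose_spec.1.2

section Step

variable {G} {ρ : V → G.Meas} {u w : V}

lemma prog_ne_top_of_geAt (h : G.geAt (G.prio u) (ρ u) (G.Prog ρ u w)) (hu : ρ u ≠ ⊤) :
    G.Prog ρ u w ≠ ⊤ := fun htop => by
  have hle : G.trunc (G.prio u) (G.Prog ρ u w) ≤ G.trunc (G.prio u) (ρ u) := h
  rw [G.trunc_eq_top_iff.2 htop, top_le_iff, G.trunc_eq_top_iff] at hle
  exact hu hle

lemma trunc_lt_of_geAt_prog (h : G.geAt (G.prio u) (ρ u) (G.Prog ρ u w)) (hu : ρ u ≠ ⊤)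
    (hodd : ¬ Even (G.prio u)) : G.trunc (G.prio u) (ρ w) < G.trunc (G.prio u) (ρ u) := by
  have hcond := G.progCond_prog ρ u w
  rw [progCond, if_neg hodd] at hcond
  rcases hcond with hlt | ⟨htop, -⟩
  · exact lt_of_lt_of_le hlt h
  · exact absurd htop (prog_ne_top_of_geAt h hu)

lemma trunc_le_of_geAt_prog (h : G.geAt (G.prio u) (ρ u) (G.Prog ρ u w)) (hu : ρ u ≠ ⊤) :
    G.trunc (G.prio u) (ρ w) ≤ G.trunc (G.prio u) (ρ u) := by
  by_cases hev : Even (G.prio u)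
  · have hcond := G.progCond_prog ρ u w
    rw [progCond, if_pos hev] at hcond
    exact le_trans hcond h
  · exact (trunc_lt_of_geAt_prog h hu hev).le

lemma ne_top_of_geAt_prog (h : G.geAt (G.prio u) (ρ u) (G.Prog ρ u w)) (hu : ρ u ≠ ⊤) :
    ρ w ≠ ⊤ := fun htop => by
  have hle := trunc_le_of_geAt_prog h hu
  rw [G.trunc_eq_top_iff.2 htop, top_le_iff, G.trunc_eq_top_iff] at hle
  exact hu hle

end Step

def DecreasesAlong (π : ℕ → V) (F : ℕ → Fin G.d → ℕ) : Prop :=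
  ∀ n, toLex (truncTuple (G.prio (π n)) (F (n + 1))) ≤
      toLex (truncTuple (G.prio (π n)) (F n)) ∧
    (¬ Even (G.prio (π n)) →
      toLex (truncTuple (G.prio (π n)) (F (n + 1))) < toLex (truncTuple (G.prio (π n)) (F n)))

section Winning

variable {G} {π : ℕ → V} {F : ℕ → Fin G.d → ℕ}

lemma infOft_iff_frequently (p : ℕ) : G.InfOft π p ↔ ∃ᶠ n in atTop, G.prio (π n) = p :=
  frequently_atTop.symm

lemma wonByEven_of_decreasesAlong (hF : G.DecreasesAlong π F) : G.WonByEven π := by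
  set q := sInf {p | G.InfOft π p}
  obtain ⟨v, hv⟩ : ∃ v, ∃ᶠ n in atTop, π n = v :=
    frequently_exists.1 (Frequently.of_forall fun n => ⟨π n, rfl⟩)
  have hq : G.InfOft π q :=
    Nat.sInf_mem (s := {p | G.InfOft π p})
      ⟨G.prio v, (infOft_iff_frequently _).2 (hv.mono fun n h => congrArg G.prio h)⟩
  have hbelow : ∀ᶠ n in atTop, q ≤ G.prio (π n) := by
    have hrare : ∀ p ∈ Finset.range q, ∀ᶠ n in atTop, G.prio (π n) ≠ p := fun p hp => by
      simpa [infOft_iff_frequently] using Nat.notMem_of_lt_sInf (Finset.mem_range.1 hp)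
    filter_upwards [(Finset.range q).eventually_all.2 hrare] with n hn
    by_contra hlt
    exact hn _ (Finset.mem_range.2 (not_le.1 hlt)) rfl
  by_contra hodd
  change ¬ Even q at hodd
  refine not_frequently_lt_of_eventually_le (f := fun n => toLex (truncTuple q (F n))) ?_ ?_
  · filter_upwards [hbelow] with n hn using toLex_truncTuple_le_of_le hn (hF n).1
  · refine ((infOft_iff_frequently q).1 hq).mono fun n hn => ?_
    have hlt := (hF n).2 (hn ▸ hodd)
    rwa [hn] at hlt

end Winning

/-- `G.d` stands for `+∞` here: it exceeds every tuple index. -/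
def minPrio (π : ℕ → V) : ℕ → ℕ
  | 0 => G.d
  | n + 1 => min (minPrio π n) (G.prio (π n))

/-- Counts, for each odd `i`, the `i`-vertices among `π 0, …, π (n - 1)` that lie in the longest
`i`-dominated prefix. -/
def stretchCount (π : ℕ → V) : ℕ → Fin G.d → ℕ
  | 0 => 0
  | n + 1 => stretchCount π n +
      if G.prio (π n) ≤ G.minPrio π n ∧ ¬ Even (G.prio (π n)) then
        Pi.single ⟨G.prio (π n), G.prio_lt_d _⟩ 1
      else 0

def potential (π : ℕ → V) (F : ℕ → Fin G.d → ℕ) (n : ℕ) : Fin G.d → ℕ :=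
  G.stretchCount π n + truncTuple (G.minPrio π n) (F n)

variable {G} {π : ℕ → V} {F : ℕ → Fin G.d → ℕ}

lemma le_minPrio_iff {j : ℕ} (hj : j ≤ G.d) {n : ℕ} :
    j ≤ G.minPrio π n ↔ ∀ m < n, j ≤ G.prio (π m) := by
  induction n with
  | zero => simpa [minPrio] using hj
  | succ n ih => rw [minPrio, le_min_iff, ih, Nat.forall_lt_succ_right]

lemma stretchCount_mono : Monotone (G.stretchCount π) :=
  monotone_nat_of_le_succ fun _ => le_self_add

lemma stretchCount_apply_eq_card {j : Fin G.d} (hj : ¬ Even (j : ℕ)) {n : ℕ}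
    (h : ∀ m < n, (j : ℕ) ≤ G.prio (π m)) :
    G.stretchCount π n j = ((Finset.range n).filter fun m => G.prio (π m) = j).card := by
  induction n with
  | zero => simp [stretchCount]
  | succ n ih =>
    rw [stretchCount, Pi.add_apply, ih fun m hm => h m (by omega), Finset.range_add_one,
      Finset.filter_insert]
    by_cases hp : G.prio (π n) = j
    · have hcond : G.prio (π n) ≤ G.minPrio π n ∧ ¬ Even (G.prio (π n)) :=
        ⟨hp ▸ (le_minPrio_iff j.isLt.le).2 fun m hm => h m (by omega), hp ▸ hj⟩
      rw [if_pos hcond, if_pos hp, Finset.card_insert_of_notMem (by simp)]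
      simp [hp]
    · rw [if_neg hp]
      split_ifs <;> simp [Fin.ext_iff, Ne.symm hp]

lemma eventually_theta_le_stretchCount (hwin : G.WonByEven π) :
    ∀ᶠ N in atTop, G.theta π ≤ ((toLex (G.stretchCount π N) : Lex _) : G.Meas) := by
  have hcomp : ∀ j : Fin G.d, ∀ᶠ N in atTop,
      (if Even (j : ℕ) then 0
        else sSup {c | ∃ l, G.domStretchPrefix π j l ∧ c = G.degree π j l}) ≤
        G.stretchCount π N j := by
    intro j
    split_ifs with hj
    · exact Eventually.of_forall fun _ => Nat.zero_le _
    refine Nat.eventually_sSup_le ?_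
    rintro _ ⟨l, ⟨hdom, -⟩, rfl⟩
    filter_upwards [eventually_ge_atTop (l + 1)] with N hN
    calc G.degree π j l = G.stretchCount π (l + 1) j :=
          (stretchCount_apply_eq_card hj fun m hm => hdom m (by omega)).symm
      _ ≤ G.stretchCount π N j := stretchCount_mono hN j
  filter_upwards [eventually_all.2 hcomp] with N hN
  rw [theta, if_pos hwin]
  exact WithTop.coe_le_coe.2 (Pi.toLex_monotone hN)

lemma potential_zero : G.potential π F 0 = F 0 := by
  simp [potential, stretchCount, minPrio, truncTuple_of_le]

lemma toLex_potential_succ_le (hF : G.DecreasesAlong π F) (n : ℕ) :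
    toLex (G.potential π F (n + 1)) ≤ toLex (G.potential π F n) := by
  set p := G.prio (π n)
  set a := G.minPrio π n
  have hdesc : toLex (truncTuple (min a p) (F (n + 1))) ≤ toLex (truncTuple (min a p) (F n)) :=
    toLex_truncTuple_le_of_le (min_le_right a p) (hF n).1
  have hwiden : toLex (truncTuple (min a p) (F n)) ≤ toLex (truncTuple a (F n)) :=
    Pi.toLex_monotone (truncTuple_le_truncTuple (min_le_left a p) _)
  suffices h : toLex (truncTuple (min a p) (F (n + 1)) +
      if p ≤ a ∧ ¬ Even p then Pi.single ⟨p, G.prio_lt_d _⟩ 1 else 0) ≤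
      toLex (truncTuple a (F n)) by
    have := add_le_add (le_refl (toLex (G.stretchCount π n))) h
    rwa [← toLex_add, ← toLex_add, add_comm (truncTuple _ _), ← add_assoc] at this
  split_ifs with hcase
  · rw [min_eq_right hcase.1] at hdesc hwiden ⊢
    exact (toLex_truncTuple_add_single_le (k := ⟨p, G.prio_lt_d _⟩) ((hF n).2 hcase.2)).trans
      hwiden
  · simpa only [add_zero] using hdesc.trans hwiden

lemma theta_le_of_decreasesAlong (hF : G.DecreasesAlong π F) :
    G.theta π ≤ ((toLex (F 0) : Lex _) : G.Meas) := by
  obtain ⟨N, hN⟩ := (eventually_theta_le_stretchCount (wonByEven_of_decreasesAlong hF)).exists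
  have hanti : Antitone fun n => toLex (G.potential π F n) :=
    antitone_nat_of_succ_le (toLex_potential_succ_le hF)
  calc G.theta π ≤ ((toLex (G.stretchCount π N) : Lex _) : G.Meas) := hN
    _ ≤ ((toLex (G.potential π F N) : Lex _) : G.Meas) :=
      WithTop.coe_le_coe.2 (Pi.toLex_monotone le_self_add)
    _ ≤ ((toLex (G.potential π F 0) : Lex _) : G.Meas) := WithTop.coe_le_coe.2 (hanti N.zero_le)
    _ = ((toLex (F 0) : Lex _) : G.Meas) := by rw [potential_zero]

lemma theta_le_of_forall_geAt_prog {ρ : V → G.Meas}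
    (h : ∀ n, G.geAt (G.prio (π n)) (ρ (π n)) (G.Prog ρ (π n) (π (n + 1)))) :
    G.theta π ≤ ρ (π 0) := by
  by_cases h0 : ρ (π 0) = ⊤
  · exact h0 ▸ le_top
  have hfin : ∀ n, ρ (π n) ≠ ⊤ := fun n => by
    induction n with
    | zero => exact h0
    | succ n ih => exact ne_top_of_geAt_prog (h n) ih
  set F : ℕ → Fin G.d → ℕ := fun n => ofLex ((ρ (π n)).untop (hfin n))
  have hF : ∀ n, ρ (π n) = ((toLex (F n) : Lex _) : G.Meas) := fun n =>
    (WithTop.coe_untop _ (hfin n)).symm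
  have hdec : G.DecreasesAlong π F := fun n => by
    have hle := trunc_le_of_geAt_prog (h n) (hfin n)
    have hlt := trunc_lt_of_geAt_prog (h n) (hfin n)
    rw [hF n, hF (n + 1), trunc_coe, trunc_coe] at hle hlt
    exact ⟨WithTop.coe_le_coe.1 hle, fun hodd => WithTop.coe_lt_coe.1 (hlt hodd)⟩
  exact (hF 0).symm ▸ theta_le_of_decreasesAlong hdec

end ParityGame

theorem even_positional_strategy_value_at_most_least_measure_general
    {V : Type*} [Fintype V] (G : ParityGame V)
    (ρbar : V → G.Meas) (hgpm : G.IsGPM ρbar) :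
    ∀ v : V, ∃ σ : V → V, (∀ u, G.ownerEven u = true → G.E u (σ u)) ∧
      ∀ π : ℕ → V, G.IsPlay π → π 0 = v → G.ConsP true σ π →
        G.theta π ≤ ρbar v := by
  intro v
  choose! σ hσE hσ using fun u (hu : G.ownerEven u = true) => (hgpm.2 u).1 hu
  refine ⟨σ, hσE, fun π hπ h0 hcons => h0 ▸ theta_le_of_forall_geAt_prog fun n => ?_⟩
  cases hown : G.ownerEven (π n)
  · exact (hgpm.2 (π n)).2 hown _ (hπ n)
  · exact hcons n hown ▸ hσ _ hown

/-- player Even has a positional strategy from any `v` guaranteeing a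
play value at most `ρ̄(v)`. -/
theorem even_positional_strategy_value_at_most_least_measure
    {V : Type*} [Fintype V] [DecidableEq V] (G : ParityGame V)
    (ρbar : V → G.Meas) (hgpm : G.IsGPM ρbar)
    (hleast : ∀ ρ : V → G.Meas, G.IsGPM ρ → ∀ v, ρbar v ≤ ρ v) :
    ∀ v : V, ∃ σ : V → V, (∀ u, G.ownerEven u = true → G.E u (σ u)) ∧
      ∀ π : ℕ → V, G.IsPlay π → π 0 = v → G.ConsP true σ π →
        G.theta π ≤ ρbar v :=
  even_positional_strategy_value_at_most_least_measure_general G ρbar hgpm
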